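/- arXiv:1502.06925 — 3 statements merged into one kernel-verified Lean document; each statement's English description precedes it below -/
import Mathlib

section
/- Let K ⊆ ℂ be closed and nonpolar, f : K → ℂ continuous, Q lower semicontinuous on K. If the set Σ := {z ∈ K : Q(z) < ∞ and liminf_{(z₁,z₂)→(z,z), z₁≠z₂ ∈ K} |f(z₁)-f(z₂)|/|z₁-z₂| > 0} is not polar, then there exists a probability measure ν on K with E^Q(ν) < ∞. -/
/-!
Take a probability measure `μ` of finite logarithmic energy carried by `Σ`. Since `Q` is finite
on `Σ`, some truncation `A = {z ∈ K | |Q z| ≤ C}` has positive `μ`-mass, and some point `z₀ ∈ Σ`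
lies in the support of `μ` restricted to `A`. The positive liminf at `z₀` gives `c > 0` with
`c |x - y| ≤ |f x - f y|` on `K` near `z₀`, so on `S = A ∩ closedBall z₀ r` for small `r` the
integrand `log (|x - y| |f x - f y|)` lies between `log c + 2 log |x - y|` and a constant.
Hence `μ` conditioned on `S` has finite weighted energy.
-/

open MeasureTheory

/-- A set `E ⊆ ℂ` is polar if no compactly supported probability measure carried by `E`
has finite logarithmic energy. -/
def PolarSet (E : Set ℂ) : Prop :=
  ∀ μ : Measure ℂ, IsProbabilityMeasure μ → μ Eᶜ = 0 →
    (∃ F : Set ℂ, IsCompact F ∧ μ Fᶜ = 0) →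
    ¬ Integrable (fun p : ℂ × ℂ => Real.log (dist p.1 p.2)) (μ.prod μ)

open Filter Metric Set Topology ProbabilityTheory

theorem LowerSemicontinuousOn.lowerSemicontinuous_piecewise_top {α β : Type*}
    [TopologicalSpace α] [Preorder β] [OrderTop β] {s : Set α} [DecidablePred (· ∈ s)]
    {f : α → β} (hf : LowerSemicontinuousOn f s) (hs : IsClosed s) :
    LowerSemicontinuous (s.piecewise f ⊤) := by
  intro x y hy
  by_cases hx : x ∈ s
  · rw [piecewise_eq_of_mem _ _ _ hx] at hy
    rw [← nhdsWithin_univ, ← union_compl_self s, nhdsWithin_union, eventually_sup]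
    constructor
    · filter_upwards [hf x hx y hy, self_mem_nhdsWithin] with z hyz hz
      rwa [piecewise_eq_of_mem _ _ _ hz]
    · filter_upwards [self_mem_nhdsWithin] with z hz
      rw [piecewise_eq_of_notMem _ _ _ hz]
      exact hy.trans_le le_top
  · rw [piecewise_eq_of_notMem _ _ _ hx] at hy
    filter_upwards [hs.isOpen_compl.mem_nhds hx] with z hz
    rwa [piecewise_eq_of_notMem _ _ _ hz]

section LowerSemicontinuousOn

variable {α : Type*} [TopologicalSpace α] [MeasurableSpace α] [OpensMeasurableSpace α]
  {K : Set α} {Q : α → EReal}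

theorem LowerSemicontinuousOn.measurableSet_inter_preimage (hQ : LowerSemicontinuousOn Q K)
    (hK : IsClosed K) {t : Set EReal} (ht : MeasurableSet t) : MeasurableSet (K ∩ Q ⁻¹' t) := by
  classical
  rw [← (piecewise_eqOn K Q ⊤).inter_preimage_eq]
  exact hK.measurableSet.inter ((hQ.lowerSemicontinuous_piecewise_top hK).measurable ht)

theorem LowerSemicontinuousOn.aemeasurable_restrict (hQ : LowerSemicontinuousOn Q K)
    (hK : IsClosed K) (μ : Measure α) : AEMeasurable Q (μ.restrict K) := by
  classical
  exact (hQ.lowerSemicontinuous_piecewise_top hK).measurable.aemeasurable.congr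
    ((ae_restrict_mem hK.measurableSet).mono (piecewise_eqOn K Q ⊤))

theorem LowerSemicontinuousOn.exists_measurableSet_abs_toReal_le
    (hQ : LowerSemicontinuousOn Q K) (hK : IsClosed K) {μ : Measure α} [NeZero μ]
    (hμ : ∀ᵐ z ∂μ, z ∈ K ∧ Q z ≠ ⊤) :
    ∃ A ⊆ K, MeasurableSet A ∧ μ A ≠ 0 ∧ ∃ C, ∀ z ∈ A, Q z ≠ ⊤ ∧ |(Q z).toReal| ≤ C := by
  set A : ℕ → Set α := fun n => K ∩ Q ⁻¹' {q | q ≠ ⊤ ∧ |q.toReal| ≤ n}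
  obtain ⟨n, hn⟩ : ∃ n, μ (A n) ≠ 0 := by
    by_contra! h
    obtain ⟨z, ⟨hzK, hzQ⟩, hz⟩ :=
      (hμ.and (measure_eq_zero_iff_ae_notMem.1 (measure_iUnion_null h))).exists
    obtain ⟨n, hn⟩ := exists_nat_ge |(Q z).toReal|
    exact hz (mem_iUnion.2 ⟨n, hzK, hzQ, hn⟩)
  have hA : MeasurableSet (A n) := hQ.measurableSet_inter_preimage hK <|
    (measurableSet_singleton ⊤).compl.inter
      (measurableSet_le measurable_ereal_toReal.abs measurable_const)
  exact ⟨A n, inter_subset_left, hA, hn, n, fun z hz => hz.2⟩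

end LowerSemicontinuousOn

theorem Filter.exists_pos_eventually_le_of_liminf_pos {ι : Type*} {l : Filter ι} {u : ι → ℝ}
    (h : 0 < liminf u l) : ∃ c, 0 < c ∧ ∀ᶠ x in l, c ≤ u x := by
  rw [liminf_eq] at h
  -- `sSup ∅ = 0` in `ℝ`
  have hne : {a | ∀ᶠ x in l, a ≤ u x}.Nonempty := by
    by_contra he
    simp [not_nonempty_iff_eq_empty.1 he] at h
  obtain ⟨c, hc, hpos⟩ := exists_lt_of_lt_csSup hne h
  exact ⟨c, hpos, hc⟩

theorem exists_pos_mul_dist_le_of_liminf_pos {α β : Type*} [PseudoMetricSpace α]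
    [PseudoMetricSpace β] {K : Set α} {f : α → β} {z : α}
    (h : 0 < liminf (fun p : α × α => dist (f p.1) (f p.2) / dist p.1 p.2)
      (𝓝[(K ×ˢ K) \ {p | p.1 = p.2}] (z, z))) :
    ∃ c, 0 < c ∧ ∃ r, 0 < r ∧
      ∀ x ∈ K ∩ closedBall z r, ∀ y ∈ K ∩ closedBall z r, c * dist x y ≤ dist (f x) (f y) := by
  obtain ⟨c, hc, hev⟩ := exists_pos_eventually_le_of_liminf_pos h
  obtain ⟨ε, hε, hball⟩ := Metric.eventually_nhds_iff.1 (eventually_nhdsWithin_iff.1 hev)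
  refine ⟨c, hc, ε / 2, half_pos hε, fun x hx y hy => ?_⟩
  rcases (dist_nonneg : 0 ≤ dist x y).eq_or_lt with hxy | hxy
  · rw [← hxy, mul_zero]
    exact dist_nonneg
  have hT : (x, y) ∈ (K ×ˢ K) \ {p | p.1 = p.2} :=
    ⟨⟨hx.1, hy.1⟩, fun h : x = y => by simp [h] at hxy⟩
  have hd : dist (x, y) (z, z) < ε := by
    rw [Prod.dist_eq]
    exact max_lt (by linarith [mem_closedBall.1 hx.2]) (by linarith [mem_closedBall.1 hy.2])
  exact (le_div_iff₀ hxy).1 (hball hd hT)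

theorem Real.abs_log_mul_le {c d F M : ℝ} (hc : 0 < c) (hd : 0 ≤ d) (hcF : c * d ≤ F)
    (hM : d * F ≤ M) : |log (d * F)| ≤ |log c| + |log M| + 2 * |log d| := by
  rcases hd.eq_or_lt with rfl | hd
  · simp only [zero_mul, log_zero, abs_zero]
    positivity
  have hdF : 0 < d * F := mul_pos hd ((mul_pos hc hd).trans_le hcF)
  have hlower : log c + log d + log d ≤ log (d * F) := by
    rw [← log_mul hc.ne' hd.ne', ← log_mul (by positivity) hd.ne']
    exact log_le_log (by positivity) (by nlinarith)
  have hupper : log (d * F) ≤ log M := log_le_log hdF hM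
  rw [abs_le]
  constructor
  · linarith [neg_abs_le (log c), neg_abs_le (log d), abs_nonneg (log M)]
  · linarith [le_abs_self (log M), abs_nonneg (log c), abs_nonneg (log d)]

section Energy

variable {α β : Type*} [PseudoMetricSpace α] [MeasurableSpace α] [OpensMeasurableSpace α]
  [SecondCountableTopology α] [PseudoMetricSpace β] [MeasurableSpace β] [OpensMeasurableSpace β]
  [SecondCountableTopology β]

theorem integrable_log_dist_mul_dist {ν : Measure α} [IsFiniteMeasure ν] {f : α → β}
    {S : Set α} {c : ℝ} (hc : 0 < c) (hS : ∀ᵐ x ∂ν, x ∈ S) (hSb : Bornology.IsBounded S)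
    (hfS : Bornology.IsBounded (f '' S))
    (hcf : ∀ x ∈ S, ∀ y ∈ S, c * dist x y ≤ dist (f x) (f y)) (hf : AEMeasurable f ν)
    (hlog : Integrable (fun p : α × α => Real.log (dist p.1 p.2)) (ν.prod ν)) :
    Integrable (fun p : α × α => Real.log (dist p.1 p.2 * dist (f p.1) (f p.2))) (ν.prod ν) := by
  obtain ⟨D, hD⟩ := isBounded_iff.1 hSb
  obtain ⟨B, hB⟩ := isBounded_iff.1 hfS
  have hmeas : AEStronglyMeasurable
      (fun p : α × α => Real.log (dist p.1 p.2 * dist (f p.1) (f p.2))) (ν.prod ν) := by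
    have hf₁ : AEMeasurable (fun p : α × α => f p.1) (ν.prod ν) :=
      hf.comp_quasiMeasurePreserving Measure.quasiMeasurePreserving_fst
    have hf₂ : AEMeasurable (fun p : α × α => f p.2) (ν.prod ν) :=
      hf.comp_quasiMeasurePreserving Measure.quasiMeasurePreserving_snd
    exact (Real.measurable_log.comp_aemeasurable (continuous_dist.measurable.aemeasurable.mul
      (continuous_dist.measurable.comp_aemeasurable (hf₁.prodMk hf₂)))).aestronglyMeasurable
  refine ((integrable_const (|Real.log c| + |Real.log (D * B)|)).add
    (hlog.abs.const_mul 2)).mono' hmeas ?_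
  filter_upwards [Measure.quasiMeasurePreserving_fst.ae hS,
    Measure.quasiMeasurePreserving_snd.ae hS] with p hp₁ hp₂
  have hdD := hD hp₁ hp₂
  exact Real.abs_log_mul_le hc dist_nonneg (hcf _ hp₁ _ hp₂) (mul_le_mul hdD
    (hB (mem_image_of_mem f hp₁) (mem_image_of_mem f hp₂)) dist_nonneg (dist_nonneg.trans hdD))

end Energy

theorem MeasureTheory.Integrable.prod_cond {α E : Type*} [MeasurableSpace α]
    [NormedAddCommGroup E] {μ : Measure α} [SFinite μ] {g : α × α → E}
    (hg : Integrable g (μ.prod μ)) (s : Set α) : Integrable g ((μ[|s]).prod (μ[|s])) := by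
  by_cases hs : μ s = 0
  · simp [cond_eq_zero_of_meas_eq_zero hs]
  have hc : (μ s)⁻¹ ≠ ⊤ := ENNReal.inv_ne_top.2 hs
  rw [ProbabilityTheory.cond, Measure.prod_smul_left, Measure.prod_smul_right,
    Measure.prod_restrict]
  exact (hg.restrict.smul_measure hc).smul_measure hc

theorem MeasureTheory.Measure.exists_mem_forall_nhds_measure_inter_pos {X : Type*}
    [TopologicalSpace X] [HereditarilyLindelofSpace X] [MeasurableSpace X]
    {μ : Measure X} {s t : Set X} (hs : MeasurableSet s) (hμs : μ s ≠ 0)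
    (ht : ∀ᵐ z ∂μ, z ∈ t) : ∃ z ∈ t, ∀ U ∈ 𝓝 z, 0 < μ (U ∩ s) := by
  have : NeZero (μ.restrict s) := ⟨by simpa using hμs⟩
  obtain ⟨z, hzt, hz⟩ := ((ae_restrict_of_ae (s := s) ht).and Measure.support_mem_ae).exists
  refine ⟨z, hzt, fun U hU => ?_⟩
  rw [← Measure.restrict_apply' hs]
  exact (Measure.mem_support_iff_forall z).1 hz U hU

theorem exists_finite_energy_measure_general
    (K : Set ℂ) (hK : IsClosed K)
    (f : ℂ → ℂ) (hf : ContinuousOn f K)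
    (Q : ℂ → EReal) (hQlsc : LowerSemicontinuousOn Q K)
    (hSigma : ¬ PolarSet {z : ℂ | z ∈ K ∧ Q z < ⊤ ∧
      0 < Filter.liminf (fun p : ℂ × ℂ => dist (f p.1) (f p.2) / dist p.1 p.2)
        (nhdsWithin (z, z) ((K ×ˢ K) \ {p : ℂ × ℂ | p.1 = p.2}))}) :
    ∃ ν : Measure ℂ, IsProbabilityMeasure ν ∧ ν Kᶜ = 0 ∧
      (∃ F : Set ℂ, IsCompact F ∧ ν Fᶜ = 0) ∧
      Integrable (fun p : ℂ × ℂ =>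
        Real.log (dist p.1 p.2 * dist (f p.1) (f p.2))) (ν.prod ν) ∧
      Integrable (fun z => (Q z).toReal) ν ∧ (∀ᵐ z ∂ν, Q z ≠ ⊤) := by
  simp only [PolarSet, not_forall, not_not] at hSigma
  obtain ⟨μ, hμ, hμSig, -, hlog⟩ := hSigma
  have hae := mem_ae_iff.2 hμSig
  obtain ⟨A, hAK, hA, hμA, C, hAQ⟩ :=
    hQlsc.exists_measurableSet_abs_toReal_le hK <|
      mem_of_superset hae fun z hz => ⟨hz.1, hz.2.1.ne⟩
  obtain ⟨z₀, ⟨-, -, hz₀⟩, hz₀A⟩ :=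
    Measure.exists_mem_forall_nhds_measure_inter_pos hA hμA hae
  obtain ⟨c, hc, r, hr, hcf⟩ := exists_pos_mul_dist_le_of_liminf_pos hz₀
  set S := closedBall z₀ r ∩ A
  have hSK : S ⊆ K := fun z hz => hAK hz.2
  have hS : MeasurableSet S := measurableSet_closedBall.inter hA
  have := cond_isProbabilityMeasure (hz₀A _ (closedBall_mem_nhds z₀ hr)).ne'
  refine ⟨μ[|S], inferInstance, ae_cond_of_forall_mem hS hSK,
    ⟨closedBall z₀ r, isCompact_closedBall z₀ r, ae_cond_of_forall_mem hS fun z hz => hz.1⟩,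
    ?_, ?_, ae_cond_of_forall_mem hS fun z hz => (hAQ z hz.2).1⟩
  · have hKr : IsCompact (K ∩ closedBall z₀ r) := (isCompact_closedBall z₀ r).inter_left hK
    exact integrable_log_dist_mul_dist hc (ae_cond_mem hS)
      (isBounded_closedBall.subset inter_subset_left)
      ((hKr.image_of_continuousOn (hf.mono inter_subset_left)).isBounded.subset
        (image_mono fun z hz => ⟨hSK hz, hz.1⟩))
      (fun x hx y hy => hcf x ⟨hSK hx, hx.1⟩ y ⟨hSK hy, hy.1⟩)
      (((hf.mono hSK).aemeasurable hS).smul_measure _) (hlog.prod_cond S)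
  · have hQS : AEMeasurable Q μ[|S] := ((hQlsc.aemeasurable_restrict hK μ).mono_measure
      (Measure.restrict_mono hSK le_rfl)).smul_measure _
    exact Integrable.of_bound hQS.ereal_toReal.aestronglyMeasurable C
      (ae_cond_of_forall_mem hS fun z hz => (hAQ z hz.2).2)

/-- if the set `Σ` of points `z ∈ K` with `Q(z) < ∞` at which the difference
quotient of `f` has positive liminf is not polar, then there is a probability measure `ν`
on `K` of finite weighted energy `E^Q(ν) < ∞`. -/
theorem exists_finite_energy_measure
    (K : Set ℂ) (hK : IsClosed K) (hKnp : ¬ PolarSet K)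
    (f : ℂ → ℂ) (hf : ContinuousOn f K)
    (Q : ℂ → EReal) (hQbot : ∀ z, Q z ≠ ⊥) (hQlsc : LowerSemicontinuousOn Q K)
    (hSigma : ¬ PolarSet {z : ℂ | z ∈ K ∧ Q z < ⊤ ∧
      0 < Filter.liminf (fun p : ℂ × ℂ => dist (f p.1) (f p.2) / dist p.1 p.2)
        (nhdsWithin (z, z) ((K ×ˢ K) \ {p : ℂ × ℂ | p.1 = p.2}))}) :
    ∃ ν : Measure ℂ, IsProbabilityMeasure ν ∧ ν Kᶜ = 0 ∧
      (∃ F : Set ℂ, IsCompact F ∧ ν Fᶜ = 0) ∧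
      Integrable (fun p : ℂ × ℂ =>
        Real.log (dist p.1 p.2 * dist (f p.1) (f p.2))) (ν.prod ν) ∧
      Integrable (fun z => (Q z).toReal) ν ∧ (∀ᵐ z ∂ν, Q z ≠ ⊤) :=
  exists_finite_energy_measure_general K hK f hf Q hQlsc hSigma
end

section
/- Let K ⊆ ℂ be compact, nonpolar, Q admissible on K, and ν a finite Borel measure on K satisfying a weighted Bernstein-Markov inequality for the class F_k of functions h_k(z) = p_k(z)q_k(f(z)) with p_k,q_k polynomials of degree ≤ k. Then Z_k := ∫_{K^{k+1}} |VDM_k^Q(z₀,…,z_k)| dν(z₀)⋯dν(z_k) satisfies lim_{k→∞} Z_k^{2/(k(k+1))} = δ^Q(K) := lim_k max_{K^{k+1}} |VDM_k^Q|^{2/(k(k+1))}. -/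
open MeasureTheory

/-- The weighted `f`-Vandermonde
`|VDM_k^Q(z)| = |∏_{i<j}(z_j-z_i)| · |∏_{i<j}(f(z_j)-f(z_i))| · exp(-k·Σ Q(z_i))`. -/
noncomputable def absVdmQ (f : ℂ → ℂ) (Q : ℂ → ℝ) (k : ℕ) (z : Fin (k + 1) → ℂ) : ℝ :=
  norm (∏ p ∈ Finset.univ.filter (fun p : Fin (k + 1) × Fin (k + 1) => p.1 < p.2),
      (z p.2 - z p.1)) *
    norm (∏ p ∈ Finset.univ.filter (fun p : Fin (k + 1) × Fin (k + 1) => p.1 < p.2),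
      (f (z p.2) - f (z p.1))) *
    Real.exp (-(k : ℝ) * ∑ i, Q (z i))

/-- `Z_k = ∫_{K^{k+1}} |VDM_k^Q| dν^{k+1}`. -/
noncomputable def Zk (ν : Measure ℂ) (f : ℂ → ℂ) (Q : ℂ → ℝ) (k : ℕ) : ℝ :=
  ∫ z : Fin (k + 1) → ℂ, absVdmQ f Q k z ∂(Measure.pi fun _ => ν)

/-- `max_{K^{k+1}} |VDM_k^Q|`. -/
noncomputable def maxVdmQ (K : Set ℂ) (f : ℂ → ℂ) (Q : ℂ → ℝ) (k : ℕ) : ℝ :=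
  sSup {v : ℝ | ∃ z : Fin (k + 1) → ℂ, (∀ i, z i ∈ K) ∧ v = absVdmQ f Q k z}

/-- The polynomial hull `K̂` of `K`. -/
def polyHull (K : Set ℂ) : Set ℂ :=
  {z : ℂ | ∀ p : Polynomial ℂ,
    norm (p.eval z) ≤ sSup ((fun w => norm (p.eval w)) '' K)}

/-!
Freeze every variable of `VDM_k^Q` but `z i`: what remains is
`G · |p(z i) q(f(z i))| e^{-kQ(z i)}` with `deg p, deg q ≤ k` and `G ≥ 0` independent of `z i`,
a multiple of a function of `F_k`. Applying the Bernstein–Markov inequality to the `k + 1`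
variables one after the other gives `|VDM_k^Q(z)| ≤ (C e^{εk})^{k+1} Z_k` on `K^{k+1}`, while
trivially `Z_k ≤ ν(ℂ)^{k+1} max |VDM_k^Q|`. After taking `2/(k(k+1))`-th powers the constants
become `C^{2/k} e^{2ε} → e^{2ε}`, and `ε > 0` is arbitrary.
-/

open Finset Polynomial Filter Topology Function

theorem Finset.prod_pairs_lt_eq_prod_erase_mul {ι M : Type*} [Fintype ι] [LinearOrder ι]
    [CommMonoid M] (g : ι → ι → M) (hg : ∀ i j, g i j = g j i) (i₀ : ι) :
    ∏ p ∈ univ.filter (fun p : ι × ι => p.1 < p.2), g p.1 p.2 =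
      (∏ j ∈ univ.erase i₀, g i₀ j) *
        ∏ p ∈ univ.filter (fun p : ι × ι => p.1 < p.2 ∧ p.1 ≠ i₀ ∧ p.2 ≠ i₀), g p.1 p.2 := by
  rw [← prod_filter_not_mul_prod_filter _ (fun p : ι × ι => p.1 ≠ i₀ ∧ p.2 ≠ i₀),
    filter_filter, filter_filter]
  congr 1
  refine prod_nbij' (fun p => if p.1 = i₀ then p.2 else p.1)
    (fun j => if i₀ < j then (i₀, j) else (j, i₀)) ?_ ?_ ?_ ?_ ?_ <;> grind

theorem norm_prod_pairs_sub_update {ι : Type*} [Fintype ι] [LinearOrder ι] (x : ι → ℂ)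
    (i₀ : ι) (w : ℂ) :
    ‖∏ p ∈ univ.filter (fun p : ι × ι => p.1 < p.2),
        (update x i₀ w p.2 - update x i₀ w p.1)‖ =
      ‖(∏ j ∈ univ.erase i₀, (X - C (x j))).eval w‖ *
        ∏ p ∈ univ.filter (fun p : ι × ι => p.1 < p.2 ∧ p.1 ≠ i₀ ∧ p.2 ≠ i₀),
          ‖x p.2 - x p.1‖ := by
  rw [norm_prod, prod_pairs_lt_eq_prod_erase_mul
    (fun i j => ‖update x i₀ w j - update x i₀ w i‖) (fun i j => norm_sub_rev _ _) i₀,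
    eval_prod, norm_prod]
  congr 1
  · refine prod_congr rfl fun j hj => ?_
    rw [update_self, update_of_ne (ne_of_mem_erase hj), eval_sub, eval_X, eval_C, norm_sub_rev]
  · refine prod_congr rfl fun p hp => ?_
    rw [mem_filter] at hp
    rw [update_of_ne hp.2.2.2, update_of_ne hp.2.2.1]

theorem absVdmQ_nonneg (f : ℂ → ℂ) (Q : ℂ → ℝ) (k : ℕ) (z : Fin (k + 1) → ℂ) :
    0 ≤ absVdmQ f Q k z := by
  unfold absVdmQ
  positivity

theorem absVdmQ_update_eq (f : ℂ → ℂ) (Q : ℂ → ℝ) (k : ℕ) (z : Fin (k + 1) → ℂ)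
    (i : Fin (k + 1)) :
    ∃ p q : ℂ[X], p.natDegree ≤ k ∧ q.natDegree ≤ k ∧ ∃ G ≥ 0, ∀ w,
      absVdmQ f Q k (update z i w) =
        ‖p.eval w * q.eval (f w)‖ * Real.exp (-(k : ℝ) * Q w) * G := by
  have hcard : #(univ.erase i) = k := by simp
  refine ⟨∏ j ∈ univ.erase i, (X - C (z j)), ∏ j ∈ univ.erase i, (X - C (f (z j))),
    (natDegree_finsetProd_X_sub_C_eq_card _ _).trans_le hcard.le,
    (natDegree_finsetProd_X_sub_C_eq_card _ _).trans_le hcard.le,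
    ‖∏ p ∈ univ.filter (fun p : Fin (k + 1) × Fin (k + 1) => p.1 < p.2 ∧ p.1 ≠ i ∧ p.2 ≠ i),
        (z p.2 - z p.1)‖ *
      ‖∏ p ∈ univ.filter (fun p : Fin (k + 1) × Fin (k + 1) => p.1 < p.2 ∧ p.1 ≠ i ∧ p.2 ≠ i),
        (f (z p.2) - f (z p.1))‖ *
      Real.exp (-(k : ℝ) * ∑ j ∈ univ.erase i, Q (z j)), by positivity, fun w => ?_⟩
  have hsum : ∑ j, Q (update z i w j) = Q w + ∑ j ∈ univ.erase i, Q (z j) := by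
    simp only [apply_update (fun _ => Q), sum_update_of_mem (mem_univ i),
      sdiff_singleton_eq_erase]
  simp only [absVdmQ, apply_update (fun _ => f)]
  rw [norm_prod_pairs_sub_update, norm_prod_pairs_sub_update, hsum, norm_mul, norm_prod,
    norm_prod, mul_add, Real.exp_add]
  ring

theorem MeasureTheory.ofReal_integral_le_lintegral_ofReal {α : Type*} [MeasurableSpace α]
    {μ : Measure α} {g : α → ℝ} (hg : ∀ x, 0 ≤ g x) :
    ENNReal.ofReal (∫ x, g x ∂μ) ≤ ∫⁻ x, ENNReal.ofReal (g x) ∂μ :=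
  calc ENNReal.ofReal (∫ x, g x ∂μ) = ‖∫ x, g x ∂μ‖ₑ :=
        (Real.enorm_eq_ofReal (integral_nonneg hg)).symm
    _ ≤ ∫⁻ x, ‖g x‖ₑ ∂μ := enorm_integral_le_lintegral_enorm g
    _ = ∫⁻ x, ENNReal.ofReal (g x) ∂μ :=
        lintegral_congr fun x => Real.enorm_eq_ofReal (hg x)

theorem ofReal_absVdmQ_le_mul_lintegral_update {K : Set ℂ} {f : ℂ → ℂ} {Q : ℂ → ℝ}
    {ν : Measure ℂ} {k : ℕ} {c : ℝ} (hc : 0 ≤ c)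
    (hBM : ∀ p q : ℂ[X], p.natDegree ≤ k → q.natDegree ≤ k → ∀ x ∈ K,
      ‖p.eval x * q.eval (f x)‖ * Real.exp (-(k : ℝ) * Q x) ≤
        c * ∫ w, ‖p.eval w * q.eval (f w)‖ * Real.exp (-(k : ℝ) * Q w) ∂ν)
    {z : Fin (k + 1) → ℂ} {i : Fin (k + 1)} (hz : z i ∈ K) :
    ENNReal.ofReal (absVdmQ f Q k z) ≤
      ENNReal.ofReal c * ∫⁻ w, ENNReal.ofReal (absVdmQ f Q k (update z i w)) ∂ν := by
  obtain ⟨p, q, hp, hq, G, hG, hV⟩ := absVdmQ_update_eq f Q k z i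
  set A : ℂ → ℝ := fun w => ‖p.eval w * q.eval (f w)‖ * Real.exp (-(k : ℝ) * Q w)
  have hA : ∀ w, 0 ≤ A w := fun w => by positivity
  have hVz : absVdmQ f Q k z = A (z i) * G := by rw [← hV, update_eq_self]
  calc ENNReal.ofReal (absVdmQ f Q k z) = ENNReal.ofReal (A (z i)) * ENNReal.ofReal G := by
        rw [hVz, ENNReal.ofReal_mul (hA _)]
    _ ≤ ENNReal.ofReal (c * ∫ w, A w ∂ν) * ENNReal.ofReal G := by
        gcongr
        exact hBM p q hp hq _ hz
    _ ≤ ENNReal.ofReal c * (∫⁻ w, ENNReal.ofReal (A w) ∂ν) * ENNReal.ofReal G := by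
        rw [ENNReal.ofReal_mul hc]
        gcongr
        exact ofReal_integral_le_lintegral_ofReal hA
    _ = ENNReal.ofReal c * ∫⁻ w, ENNReal.ofReal (absVdmQ f Q k (update z i w)) ∂ν := by
        rw [mul_assoc, ← lintegral_mul_const' _ _ ENNReal.ofReal_ne_top]
        exact congrArg _ (lintegral_congr fun w => by rw [hV, ENNReal.ofReal_mul (hA w)])

theorem MeasureTheory.le_pow_card_mul_lintegral_pi {ι α : Type*} [Fintype ι] [DecidableEq ι]
    [MeasurableSpace α] {μ : Measure α} [SigmaFinite μ] {K : Set α} (hK : ∀ᵐ x ∂μ, x ∈ K)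
    {F : (ι → α) → ENNReal} (hF : Measurable F) {c : ENNReal}
    (hstep : ∀ z : ι → α, (∀ i, z i ∈ K) → ∀ i, F z ≤ c * ∫⁻ w, F (update z i w) ∂μ)
    (z : ι → α) (hz : ∀ i, z i ∈ K) :
    F z ≤ c ^ Fintype.card ι * ∫⁻ y, F y ∂Measure.pi fun _ => μ := by
  suffices h : ∀ s : Finset ι, ∀ z : ι → α, (∀ i, z i ∈ K) →
      F z ≤ c ^ #s * (∫⋯∫⁻_s, F ∂fun _ => μ) z by
    simpa using h univ z hz
  intro s
  induction s using Finset.induction with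
  | empty => simp
  | @insert i s hi ih =>
    intro z hz
    calc F z ≤ c * ∫⁻ w, F (update z i w) ∂μ := hstep z hz i
      _ ≤ c * ∫⁻ w, c ^ #s * (∫⋯∫⁻_s, F ∂fun _ => μ) (update z i w) ∂μ := by
          gcongr c * ?_
          exact lintegral_mono_ae (hK.mono fun w hw =>
            ih _ ((forall_update_iff z fun _ x => x ∈ K).2 ⟨hw, fun j _ => hz j⟩))
      _ = c ^ #(insert i s) * (∫⋯∫⁻_insert i s, F ∂fun _ => μ) z := by
          have hmeas : Measurable fun w => (∫⋯∫⁻_s, F ∂fun _ => μ) (update z i w) :=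
            (hF.lmarginal _).comp (measurable_update z)
          rw [lintegral_const_mul _ hmeas,
            lmarginal_insert _ hF hi, card_insert_of_notMem hi, pow_succ]
          ring

theorem MeasurableSet.exists_measurable_eqOn {α β : Type*} [MeasurableSpace α]
    [MeasurableSpace β] [Nonempty β] {s : Set α} (hs : MeasurableSet s) {g : α → β}
    (hg : Measurable (s.domRestrict g)) : ∃ g' : α → β, Measurable g' ∧ Set.EqOn g' g s := by
  obtain ⟨g', hg'm, hg'⟩ :=
    (MeasurableEmbedding.subtype_coe hs).exists_measurable_extend hg fun _ => inferInstance
  exact ⟨g', hg'm, fun x hx => congrFun hg' ⟨x, hx⟩⟩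

theorem measurable_absVdmQ {f : ℂ → ℂ} {Q : ℂ → ℝ} (hf : Measurable f) (hQ : Measurable Q)
    (k : ℕ) : Measurable (absVdmQ f Q k) := by
  unfold absVdmQ
  fun_prop

theorem exists_measurable_eq_absVdmQ {K : Set ℂ} (hK : MeasurableSet K) {f : ℂ → ℂ}
    {Q : ℂ → ℝ} (hf : ContinuousOn f K) (hQ : LowerSemicontinuousOn Q K) (k : ℕ) :
    ∃ V : (Fin (k + 1) → ℂ) → ℝ, Measurable V ∧
      ∀ z : Fin (k + 1) → ℂ, (∀ i, z i ∈ K) → V z = absVdmQ f Q k z := by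
  obtain ⟨f', hf'm, hf'⟩ := hK.exists_measurable_eqOn hf.domRestrict.measurable
  obtain ⟨Q', hQ'm, hQ'⟩ :=
    hK.exists_measurable_eqOn (lowerSemicontinuous_restrict_iff.2 hQ).measurable
  refine ⟨absVdmQ f' Q' k, measurable_absVdmQ hf'm hQ'm k, fun z hz => ?_⟩
  simp only [absVdmQ, hf' (hz _), hQ' (hz _)]

theorem norm_prod_pairs_sub_le {ι : Type*} (s : Finset (ι × ι)) {x : ι → ℂ} {R : ℝ}
    (hR : ∀ i, ‖x i‖ ≤ R) : ‖∏ p ∈ s, (x p.2 - x p.1)‖ ≤ (2 * R) ^ #s := by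
  rw [norm_prod, ← prod_const]
  refine prod_le_prod (fun _ _ => norm_nonneg _) fun p _ => ?_
  linarith [norm_sub_le (x p.2) (x p.1), hR p.1, hR p.2]

theorem exists_forall_absVdmQ_le {K : Set ℂ} (hK : IsCompact K) {f : ℂ → ℂ} {Q : ℂ → ℝ}
    (hf : ContinuousOn f K) (hQ : LowerSemicontinuousOn Q K) (k : ℕ) :
    ∃ B, ∀ z : Fin (k + 1) → ℂ, (∀ i, z i ∈ K) → absVdmQ f Q k z ≤ B := by
  obtain ⟨m, hm⟩ := hQ.bddBelow_of_isCompact hK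
  obtain ⟨R, hR⟩ := hK.isBounded.exists_norm_le
  obtain ⟨S, hS⟩ := (hK.image_of_continuousOn hf).isBounded.exists_norm_le
  set N := #(univ.filter fun p : Fin (k + 1) × Fin (k + 1) => p.1 < p.2)
  refine ⟨(2 * R) ^ N * (2 * S) ^ N * Real.exp (-(k : ℝ) * ((k + 1) * m)), fun z hz => ?_⟩
  have hsum : ((k : ℝ) + 1) * m ≤ ∑ i, Q (z i) := by
    simpa using card_nsmul_le_sum univ (fun i => Q (z i)) m fun i _ => hm ⟨z i, hz i, rfl⟩
  have h1 := norm_prod_pairs_sub_le (univ.filter fun p : Fin (k + 1) × Fin (k + 1) => p.1 < p.2)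
    fun i => hR _ (hz i)
  have h2 := norm_prod_pairs_sub_le (univ.filter fun p : Fin (k + 1) × Fin (k + 1) => p.1 < p.2)
    fun i => hS _ ⟨z i, hz i, rfl⟩
  have h3 : Real.exp (-(k : ℝ) * ∑ i, Q (z i)) ≤ Real.exp (-(k : ℝ) * ((k + 1) * m)) :=
    Real.exp_le_exp.2 (mul_le_mul_of_nonpos_left hsum (neg_nonpos.2 k.cast_nonneg))
  exact mul_le_mul (mul_le_mul h1 h2 (norm_nonneg _) ((norm_nonneg _).trans h1)) h3
    (Real.exp_nonneg _) (mul_nonneg ((norm_nonneg _).trans h1) ((norm_nonneg _).trans h2))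

theorem maxVdmQ_nonneg (K : Set ℂ) (f : ℂ → ℂ) (Q : ℂ → ℝ) (k : ℕ) : 0 ≤ maxVdmQ K f Q k :=
  Real.sSup_nonneg fun _ ⟨z, _, hv⟩ => hv ▸ absVdmQ_nonneg f Q k z

theorem Zk_nonneg (ν : Measure ℂ) (f : ℂ → ℂ) (Q : ℂ → ℝ) (k : ℕ) : 0 ≤ Zk ν f Q k :=
  integral_nonneg (absVdmQ_nonneg f Q k)

theorem absVdmQ_le_maxVdmQ {K : Set ℂ} (hK : IsCompact K) {f : ℂ → ℂ} {Q : ℂ → ℝ}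
    (hf : ContinuousOn f K) (hQ : LowerSemicontinuousOn Q K) {k : ℕ} {z : Fin (k + 1) → ℂ}
    (hz : ∀ i, z i ∈ K) : absVdmQ f Q k z ≤ maxVdmQ K f Q k := by
  obtain ⟨B, hB⟩ := exists_forall_absVdmQ_le hK hf hQ k
  exact le_csSup ⟨B, fun _ ⟨y, hy, hv⟩ => hv ▸ hB y hy⟩ ⟨z, hz, rfl⟩

theorem MeasureTheory.Measure.ae_forall_mem_pi {ι α : Type*} [Fintype ι] [MeasurableSpace α]
    {μ : Measure α} [SigmaFinite μ] {K : Set α} (hK : ∀ᵐ x ∂μ, x ∈ K) :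
    ∀ᵐ z ∂Measure.pi fun _ : ι => μ, ∀ i, z i ∈ K :=
  ae_all_iff.2 fun _ => tendsto_eval_ae_ae.eventually hK

section FiniteMeasure

variable {K : Set ℂ} {f : ℂ → ℂ} {Q : ℂ → ℝ} {ν : Measure ℂ} [IsFiniteMeasure ν]

theorem integrable_absVdmQ (hK : IsCompact K) (hf : ContinuousOn f K)
    (hQ : LowerSemicontinuousOn Q K) (hKν : ∀ᵐ x ∂ν, x ∈ K) (k : ℕ) :
    Integrable (absVdmQ f Q k) (Measure.pi fun _ => ν) := by
  obtain ⟨V, hVm, hV⟩ := exists_measurable_eq_absVdmQ hK.measurableSet hf hQ k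
  obtain ⟨B, hB⟩ := exists_forall_absVdmQ_le hK hf hQ k
  have hae := Measure.ae_forall_mem_pi (ι := Fin (k + 1)) hKν
  refine Integrable.mono' (integrable_const B)
    (hVm.aestronglyMeasurable.congr (hae.mono fun z hz => hV z hz)) (hae.mono fun z hz => ?_)
  rw [Real.norm_of_nonneg (absVdmQ_nonneg f Q k z)]
  exact hB z hz

theorem Zk_le_measureReal_univ_pow_mul_maxVdmQ (hK : IsCompact K) (hf : ContinuousOn f K)
    (hQ : LowerSemicontinuousOn Q K) (hKν : ∀ᵐ x ∂ν, x ∈ K) (k : ℕ) :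
    Zk ν f Q k ≤ ν.real Set.univ ^ (k + 1) * maxVdmQ K f Q k := by
  calc Zk ν f Q k ≤ ∫ _ : Fin (k + 1) → ℂ, maxVdmQ K f Q k ∂Measure.pi fun _ => ν :=
        integral_mono_of_nonneg (.of_forall (absVdmQ_nonneg f Q k)) (integrable_const _)
          ((Measure.ae_forall_mem_pi hKν).mono fun z hz => absVdmQ_le_maxVdmQ hK hf hQ hz)
    _ = ν.real Set.univ ^ (k + 1) * maxVdmQ K f Q k := by
        simp [measureReal_def, Measure.pi_univ, ENNReal.toReal_pow]

theorem maxVdmQ_le_pow_mul_Zk (hK : IsCompact K) (hf : ContinuousOn f K)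
    (hQ : LowerSemicontinuousOn Q K) (hKν : ∀ᵐ x ∂ν, x ∈ K) {k : ℕ} {c : ℝ} (hc : 0 ≤ c)
    (hBM : ∀ p q : ℂ[X], p.natDegree ≤ k → q.natDegree ≤ k → ∀ x ∈ K,
      ‖p.eval x * q.eval (f x)‖ * Real.exp (-(k : ℝ) * Q x) ≤
        c * ∫ w, ‖p.eval w * q.eval (f w)‖ * Real.exp (-(k : ℝ) * Q w) ∂ν) :
    maxVdmQ K f Q k ≤ c ^ (k + 1) * Zk ν f Q k := by
  -- `f` and `Q` are arbitrary off `K`, so the iterated integrals are taken of a measurable `V`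
  -- that agrees with `|VDM_k^Q|` on `K^{k+1}`.
  obtain ⟨V, hVm, hV⟩ := exists_measurable_eq_absVdmQ hK.measurableSet hf hQ k
  have hae := Measure.ae_forall_mem_pi (ι := Fin (k + 1)) hKν
  have hZ : ∫⁻ z, ENNReal.ofReal (V z) ∂Measure.pi (fun _ => ν) =
      ENNReal.ofReal (Zk ν f Q k) := by
    rw [Zk, ofReal_integral_eq_lintegral_ofReal (integrable_absVdmQ hK hf hQ hKν k)
      (.of_forall (absVdmQ_nonneg f Q k))]
    exact lintegral_congr_ae (hae.mono fun z hz => congrArg ENNReal.ofReal (hV z hz))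
  have hstep : ∀ z : Fin (k + 1) → ℂ, (∀ i, z i ∈ K) → ∀ i, ENNReal.ofReal (V z) ≤
      ENNReal.ofReal c * ∫⁻ w, ENNReal.ofReal (V (update z i w)) ∂ν := by
    intro z hz i
    rw [hV z hz]
    refine (ofReal_absVdmQ_le_mul_lintegral_update hc hBM (hz i)).trans_eq
      (congrArg _ (lintegral_congr_ae (hKν.mono fun w hw => congrArg ENNReal.ofReal ?_)))
    exact (hV _ ((forall_update_iff z fun _ x => x ∈ K).2 ⟨hw, fun j _ => hz j⟩)).symm
  refine Real.sSup_le ?_ (mul_nonneg (pow_nonneg hc _) (Zk_nonneg ν f Q k))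
  rintro _ ⟨z, hz, rfl⟩
  have key := le_pow_card_mul_lintegral_pi (F := fun z => ENNReal.ofReal (V z)) hKν
    (ENNReal.measurable_ofReal.comp hVm) hstep z hz
  rw [hV z hz, hZ, Fintype.card_fin, ← ENNReal.ofReal_pow hc,
    ← ENNReal.ofReal_mul (pow_nonneg hc _)] at key
  exact (ENNReal.ofReal_le_ofReal_iff (mul_nonneg (pow_nonneg hc _) (Zk_nonneg ν f Q k))).1 key

end FiniteMeasure

theorem exists_gt_one_lt_of_continuousAt {g : ℝ → ℝ} {d : ℝ} (hg : ContinuousAt g 1)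
    (hd : g 1 < d) : ∃ t > 1, g t < d :=
  (((hg.eventually (gt_mem_nhds hd)).filter_mono nhdsWithin_le_nhds).and
    (eventually_mem_nhdsWithin (s := Set.Ioi 1))).exists.imp fun _ h => ⟨h.2, h.1⟩

theorem tendsto_of_eventually_le_mul {ι : Type*} {l : Filter ι} {a b : ι → ℝ} {δ : ℝ}
    (hb : Tendsto b l (𝓝 δ)) (hab : ∀ t > 1, ∀ᶠ i in l, a i ≤ t * b i)
    (hba : ∀ t > 1, ∀ᶠ i in l, b i ≤ t * a i) : Tendsto a l (𝓝 δ) := by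
  rw [tendsto_order]
  constructor
  · intro c hc
    obtain ⟨t, ht, htc⟩ := exists_gt_one_lt_of_continuousAt (g := fun t => c * t)
      (by fun_prop) (by simpa using hc)
    filter_upwards [hba t ht, hb.eventually (lt_mem_nhds htc)] with i hi hi'
    exact lt_of_mul_lt_mul_left (by linarith : t * c < t * a i) (by linarith)
  · intro c hc
    obtain ⟨t, ht, htc⟩ := exists_gt_one_lt_of_continuousAt (g := fun t => t * δ)
      (by fun_prop) (by simpa using hc)
    filter_upwards [hab t ht, (hb.const_mul t).eventually (gt_mem_nhds htc)] with i hi hi'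
    linarith

theorem rpow_le_rpow_of_le_pow_mul {x y c : ℝ} {k : ℕ} (hk : k ≠ 0) (hx : 0 ≤ x) (hy : 0 ≤ y)
    (hc : 0 ≤ c) (h : x ≤ c ^ (k + 1) * y) :
    x ^ (2 / ((k : ℝ) * (k + 1))) ≤ c ^ (2 / (k : ℝ)) * y ^ (2 / ((k : ℝ) * (k + 1))) :=
  calc x ^ (2 / ((k : ℝ) * (k + 1))) ≤ (c ^ (k + 1) * y) ^ (2 / ((k : ℝ) * (k + 1))) :=
        Real.rpow_le_rpow hx h (by positivity)
    _ = c ^ (2 / (k : ℝ)) * y ^ (2 / ((k : ℝ) * (k + 1))) := by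
        rw [Real.mul_rpow (pow_nonneg hc _) hy, ← Real.rpow_natCast, ← Real.rpow_mul hc]
        congr 2
        push_cast
        field_simp

theorem eventually_rpow_le_mul {x y : ℕ → ℝ} (hx : ∀ k, 0 ≤ x k) (hy : ∀ k, 0 ≤ y k)
    (h : ∀ ε > 0, ∃ C > 0, ∀ k : ℕ, x k ≤ (C * Real.exp (ε * k)) ^ (k + 1) * y k)
    {t : ℝ} (ht : 1 < t) :
    ∀ᶠ k : ℕ in atTop,
      x k ^ (2 / ((k : ℝ) * (k + 1))) ≤ t * y k ^ (2 / ((k : ℝ) * (k + 1))) := by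
  set ε := Real.log t / 4
  have hε : 0 < ε := by have := Real.log_pos ht; positivity
  obtain ⟨C, hC, hxy⟩ := h ε hε
  have hCk : Tendsto (fun k : ℕ => C ^ (2 / (k : ℝ))) atTop (𝓝 1) := by
    simpa [Function.comp_def] using (Real.continuousAt_const_rpow hC.ne').tendsto.comp
      (tendsto_const_div_atTop_nhds_zero_nat 2)
  filter_upwards [hCk.eventually_lt_const (Real.one_lt_exp_iff.2 (by positivity : 0 < 2 * ε)),
    eventually_ne_atTop 0] with k hCk hk
  calc x k ^ (2 / ((k : ℝ) * (k + 1)))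
      ≤ (C * Real.exp (ε * k)) ^ (2 / (k : ℝ)) * y k ^ (2 / ((k : ℝ) * (k + 1))) :=
        rpow_le_rpow_of_le_pow_mul hk (hx k) (hy k) (by positivity) (hxy k)
    _ = C ^ (2 / (k : ℝ)) * Real.exp (2 * ε) * y k ^ (2 / ((k : ℝ) * (k + 1))) := by
        rw [Real.mul_rpow hC.le (Real.exp_nonneg _), ← Real.exp_mul]
        field_simp
    _ ≤ Real.exp (2 * ε) * Real.exp (2 * ε) * y k ^ (2 / ((k : ℝ) * (k + 1))) := by
        gcongr
        exact Real.rpow_nonneg (hy k) _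
    _ = t * y k ^ (2 / ((k : ℝ) * (k + 1))) := by
        rw [← Real.exp_add, show 2 * ε + 2 * ε = Real.log t by ring, Real.exp_log (by linarith)]

theorem Zk_asymptotics_general
    (K : Set ℂ) (hK : IsCompact K)
    (Q : ℂ → ℝ) (hQ : LowerSemicontinuousOn Q K)
    (U : Set ℂ)
    (f : ℂ → ℂ) (hf : DifferentiableOn ℂ f U)
    (hD : ∃ D : Set ℂ, IsCompact D ∧ D ⊆ U ∧ K ⊆ D ∧ f '' K ⊆ D)
    (ν : Measure ℂ) [IsFiniteMeasure ν] (hνK : ν Kᶜ = 0)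
    -- the weighted Bernstein–Markov inequality for the class `F_k`:
    (hBM : ∀ ε > (0 : ℝ), ∃ C > (0 : ℝ), ∀ k : ℕ, ∀ p q : Polynomial ℂ,
      p.natDegree ≤ k → q.natDegree ≤ k → ∀ z ∈ K,
        norm (p.eval z * q.eval (f z)) * Real.exp (-(k : ℝ) * Q z) ≤
          C * Real.exp (ε * k) *
            ∫ w, norm (p.eval w * q.eval (f w)) * Real.exp (-(k : ℝ) * Q w) ∂ν)
    (δ : ℝ)
    (hδ : Filter.Tendsto (fun k : ℕ => (maxVdmQ K f Q k) ^ (2 / ((k : ℝ) * (k + 1))))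
      Filter.atTop (nhds δ)) :
    Filter.Tendsto (fun k : ℕ => (Zk ν f Q k) ^ (2 / ((k : ℝ) * (k + 1))))
      Filter.atTop (nhds δ) := by
  obtain ⟨D, -, hDU, hKD, -⟩ := hD
  have hfK : ContinuousOn f K := hf.continuousOn.mono (hKD.trans hDU)
  have hKν : ∀ᵐ x ∂ν, x ∈ K := mem_ae_iff.2 hνK
  refine tendsto_of_eventually_le_mul hδ (fun t ht => eventually_rpow_le_mul (Zk_nonneg ν f Q)
    (maxVdmQ_nonneg K f Q) (fun ε _ => ⟨ν.real Set.univ + 1, by positivity, fun k => ?_⟩) ht)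
    (fun t ht => eventually_rpow_le_mul (maxVdmQ_nonneg K f Q) (Zk_nonneg ν f Q)
      (fun ε hε => ?_) ht)
  · calc Zk ν f Q k ≤ ν.real Set.univ ^ (k + 1) * maxVdmQ K f Q k :=
          Zk_le_measureReal_univ_pow_mul_maxVdmQ hK hfK hQ hKν k
      _ ≤ ((ν.real Set.univ + 1) * Real.exp (ε * k)) ^ (k + 1) * maxVdmQ K f Q k := by
          refine mul_le_mul_of_nonneg_right (pow_le_pow_left₀ measureReal_nonneg ?_ _)
            (maxVdmQ_nonneg K f Q k)
          exact (le_add_of_nonneg_right zero_le_one).trans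
            (le_mul_of_one_le_right (by positivity) (Real.one_le_exp (by positivity)))
  · obtain ⟨C, hC, hBMC⟩ := hBM ε hε
    exact ⟨C, hC, fun k => maxVdmQ_le_pow_mul_Zk hK hfK hQ hKν (by positivity) (hBMC k)⟩

/-- free energy asymptotics.  If `K ⊆ ℂ` is compact and nonpolar, `Q` is
admissible on `K`, `f` is holomorphic on a neighborhood of the polynomial hull of `K`
(with a compact `D ⊆ U` containing `K` and `f(K)`), and the finite measure `ν` on `K`
satisfies the weighted Bernstein–Markov inequality for the class
`F_k = {p_k(z)·q_k(f(z))}`, then `Z_k^{2/(k(k+1))}` converges to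
`δ^Q(K) = lim_k (max_{K^{k+1}} |VDM_k^Q|)^{2/(k(k+1))}`. -/
theorem Zk_asymptotics
    (K : Set ℂ) (hK : IsCompact K) (hKnp : ¬ PolarSet K)
    (Q : ℂ → ℝ) (hQ : LowerSemicontinuousOn Q K)
    (U : Set ℂ) (hU : IsOpen U) (hKU : polyHull K ⊆ U)
    (f : ℂ → ℂ) (hf : DifferentiableOn ℂ f U)
    (hD : ∃ D : Set ℂ, IsCompact D ∧ D ⊆ U ∧ K ⊆ D ∧ f '' K ⊆ D)
    (ν : Measure ℂ) [IsFiniteMeasure ν] (hνK : ν Kᶜ = 0)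
    -- the weighted Bernstein–Markov inequality for the class `F_k`:
    (hBM : ∀ ε > (0 : ℝ), ∃ C > (0 : ℝ), ∀ k : ℕ, ∀ p q : Polynomial ℂ,
      p.natDegree ≤ k → q.natDegree ≤ k → ∀ z ∈ K,
        norm (p.eval z * q.eval (f z)) * Real.exp (-(k : ℝ) * Q z) ≤
          C * Real.exp (ε * k) *
            ∫ w, norm (p.eval w * q.eval (f w)) * Real.exp (-(k : ℝ) * Q w) ∂ν)
    (δ : ℝ)
    (hδ : Filter.Tendsto (fun k : ℕ => (maxVdmQ K f Q k) ^ (2 / ((k : ℝ) * (k + 1))))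
      Filter.atTop (nhds δ)) :
    Filter.Tendsto (fun k : ℕ => (Zk ν f Q k) ^ (2 / ((k : ℝ) * (k + 1))))
      Filter.atTop (nhds δ) :=
  Zk_asymptotics_general K hK Q hQ U f hf hD ν hνK hBM δ hδ
end

section
/- Let K ⊆ ℂ be closed and nonpolar, f : K → ℂ continuous, Q f-admissible on K, and μ a probability measure on K. Then there exist an increasing sequence of compact sets K_m ⊆ K and probability measures μ_m supported on K_m such that μ_m → μ weakly and E^{Q|_{K_m}}(μ_m) → E^Q(μ) as m → ∞ (the limit possibly +∞). -/
/-!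
The kernel is bounded below on `K × K`: since `|x - y| ≤ |x| + |y|`, one has
`k(x, y) ≥ ψ(x) + ψ(y)` with `ψ(z) = Q(z) - ½ log((1 + |z|²)(1 + |f(z)|²))`, and `ψ` is bounded
below on `K` because it is lower semicontinuous and tends to `+∞` at infinity. So the negative
part of `k` has finite integral. Taking `K_m = K ∩ {|z| ≤ m + n₀}`, with `n₀` chosen so that
`μ(K_m) > 0`, and `μ_m` the normalized restriction of `μ` to `K_m`, the measure `μ_m ⊗ μ_m` is the
normalized restriction of `μ ⊗ μ` to `K_m × K_m`, and monotone convergence applies to the positive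
and negative parts of `k` separately. No measurability of `k` is needed: for increasing sets,
`∫⁻_{⋃ s_n} g = ⨆ ∫⁻_{s_n} g` holds for every `g`.
-/

open MeasureTheory
open scoped ENNReal

/-- The weighted kernel `k(x,y) = -log(|x-y|·|f(x)-f(y)|) + Q(x) + Q(y)`. -/
noncomputable def wKernel (f : ℂ → ℂ) (Q : ℂ → ℝ) (p : ℂ × ℂ) : ℝ :=
  -Real.log (dist p.1 p.2 * dist (f p.1) (f p.2)) + Q p.1 + Q p.2

/-- The weighted energy `E^Q(μ) = ∫∫ k(x,y) dμ dμ`, with values in `ℝ ∪ {±∞}`, defined as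
the difference of the integrals of the positive and negative parts of the kernel. -/
noncomputable def energyQE (f : ℂ → ℂ) (Q : ℂ → ℝ) (μ : Measure ℂ) : EReal :=
  ((∫⁻ p : ℂ × ℂ, ENNReal.ofReal (wKernel f Q p) ∂(μ.prod μ) : ℝ≥0∞) : EReal)
    - ((∫⁻ p : ℂ × ℂ, ENNReal.ofReal (-(wKernel f Q p)) ∂(μ.prod μ) : ℝ≥0∞) : EReal)

open ProbabilityTheory Filter Topology Set

theorem ProbabilityTheory.cond_prod_cond {α β : Type*} [MeasurableSpace α] [MeasurableSpace β]
    (μ : Measure α) (ν : Measure β) [SFinite μ] [SFinite ν] (s : Set α) (t : Set β) :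
    μ[|s].prod ν[|t] = (μ.prod ν)[|s ×ˢ t] := by
  rcases eq_or_ne (μ s) 0 with hs | hs
  · simp [cond, Measure.restrict_eq_zero.2 hs, ← Measure.prod_restrict]
  rcases eq_or_ne (ν t) 0 with ht | ht
  · simp [cond, Measure.restrict_eq_zero.2 ht, ← Measure.prod_restrict]
  simp only [cond, Measure.prod_smul_left, Measure.prod_smul_right, smul_smul,
    Measure.prod_restrict, Measure.prod_prod, ENNReal.mul_inv (.inl hs) (.inr ht), mul_comm]

theorem ae_mem_prod_of_ae_mem {α β : Type*} [MeasurableSpace α] [MeasurableSpace β]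
    {μ : Measure α} {ν : Measure β} [SFinite ν] {s : Set α} {t : Set β}
    (hs : ∀ᵐ x ∂μ, x ∈ s) (ht : ∀ᵐ y ∂ν, y ∈ t) : ∀ᵐ p ∂μ.prod ν, p ∈ s ×ˢ t :=
  (Measure.quasiMeasurePreserving_fst.ae hs).and (Measure.quasiMeasurePreserving_snd.ae ht)

section MonotoneExhaustion

variable {α : Type*} [MeasurableSpace α] {μ : Measure α} {s : ℕ → Set α}

theorem tendsto_measure_of_monotone_of_ae_mem_iUnion [IsProbabilityMeasure μ]
    (hmono : Monotone s) (hcover : ∀ᵐ x ∂μ, x ∈ ⋃ n, s n) :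
    Tendsto (fun n => μ (s n)) atTop (𝓝 1) := by
  have hfull : μ (⋃ n, s n) = 1 := by
    rw [measure_congr (ae_eq_univ.2 (ae_iff.1 hcover)), measure_univ]
  exact hfull ▸ tendsto_measure_iUnion_atTop hmono

theorem tendsto_setLIntegral_of_monotone_of_ae_mem_iUnion (hmono : Monotone s)
    (hcover : ∀ᵐ x ∂μ, x ∈ ⋃ n, s n) (g : α → ℝ≥0∞) :
    Tendsto (fun n => ∫⁻ x in s n, g x ∂μ) atTop (𝓝 (∫⁻ x, g x ∂μ)) := by
  have hlim : ∫⁻ x, g x ∂μ = ⨆ n, ∫⁻ x in s n, g x ∂μ := by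
    rw [← setLIntegral_iUnion_of_directed g hmono.directed_le,
      Measure.restrict_eq_self_of_ae_mem hcover]
  rw [hlim]
  exact tendsto_atTop_iSup fun m n hmn =>
    lintegral_mono' (Measure.restrict_mono (hmono hmn) le_rfl) le_rfl

theorem tendsto_lintegral_cond_of_monotone [IsProbabilityMeasure μ] (hmono : Monotone s)
    (hcover : ∀ᵐ x ∂μ, x ∈ ⋃ n, s n) (g : α → ℝ≥0∞) :
    Tendsto (fun n => ∫⁻ x, g x ∂μ[|s n]) atTop (𝓝 (∫⁻ x, g x ∂μ)) := by
  have hinv : Tendsto (fun n => (μ (s n))⁻¹) atTop (𝓝 1) := by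
    simpa using (tendsto_measure_of_monotone_of_ae_mem_iUnion hmono hcover).inv
  simpa [ProbabilityTheory.cond] using ENNReal.Tendsto.mul hinv (.inl one_ne_zero)
    (tendsto_setLIntegral_of_monotone_of_ae_mem_iUnion hmono hcover g) (.inr ENNReal.one_ne_top)

theorem tendsto_integral_cond_of_monotone [IsProbabilityMeasure μ] (hs : ∀ n, MeasurableSet (s n))
    (hmono : Monotone s) (hcover : ∀ᵐ x ∂μ, x ∈ ⋃ n, s n) {g : α → ℝ} (hg : Integrable g μ) :
    Tendsto (fun n => ∫ x, g x ∂μ[|s n]) atTop (𝓝 (∫ x, g x ∂μ)) := by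
  have hinv : Tendsto (fun n => (μ (s n))⁻¹.toReal) atTop (𝓝 1) := by
    have := (tendsto_measure_of_monotone_of_ae_mem_iUnion hmono hcover).inv
    rw [inv_one] at this
    exact (ENNReal.tendsto_toReal ENNReal.one_ne_top).comp this
  have hset := tendsto_setIntegral_of_monotone hs hmono hg.integrableOn
  rw [Measure.restrict_eq_self_of_ae_mem hcover] at hset
  simpa [ProbabilityTheory.cond, integral_smul_measure] using hinv.smul hset

end MonotoneExhaustion

theorem EReal.tendsto_coe_ennreal_sub {ι : Type*} {l : Filter ι} {a b : ι → ℝ≥0∞} {x y : ℝ≥0∞}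
    (ha : Tendsto a l (𝓝 x)) (hb : Tendsto b l (𝓝 y)) (hy : y ≠ ∞) :
    Tendsto (fun i => (a i : EReal) - b i) l (𝓝 ((x : EReal) - y)) := by
  have hcont : ContinuousAt (fun p : EReal × EReal => p.1 + p.2) ((x : EReal), -(y : EReal)) :=
    EReal.continuousAt_add (.inr (by simpa using hy)) (.inl (by simp))
  simp only [sub_eq_add_neg]
  exact hcont.tendsto.comp
    ((EReal.tendsto_coe_ennreal.2 ha).prodMk_nhds (EReal.tendsto_coe_ennreal.2 hb).neg)

theorem dist_sq_le_one_add_sq_mul_one_add_sq {E : Type*} [SeminormedAddCommGroup E] (x y : E) :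
    dist x y ^ 2 ≤ (1 + ‖x‖ ^ 2) * (1 + ‖y‖ ^ 2) := by
  have hxy := dist_le_norm_add_norm x y
  nlinarith [sq_nonneg (‖x‖ * ‖y‖ - 1), dist_nonneg (x := x) (y := y), norm_nonneg x, norm_nonneg y]

theorem log_dist_mul_dist_le {E F : Type*} [SeminormedAddCommGroup E] [SeminormedAddCommGroup F]
    (f : E → F) (x y : E) :
    Real.log (dist x y * dist (f x) (f y)) ≤
      1 / 2 * Real.log ((1 + ‖x‖ ^ 2) * (1 + ‖f x‖ ^ 2))
        + 1 / 2 * Real.log ((1 + ‖y‖ ^ 2) * (1 + ‖f y‖ ^ 2)) := by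
  set a := (1 + ‖x‖ ^ 2) * (1 + ‖f x‖ ^ 2)
  set b := (1 + ‖y‖ ^ 2) * (1 + ‖f y‖ ^ 2)
  have ha : 1 ≤ a := one_le_mul_of_one_le_of_one_le (le_add_of_nonneg_right (by positivity))
    (le_add_of_nonneg_right (by positivity))
  have hb : 1 ≤ b := one_le_mul_of_one_le_of_one_le (le_add_of_nonneg_right (by positivity))
    (le_add_of_nonneg_right (by positivity))
  have hsq : (dist x y * dist (f x) (f y)) ^ 2 ≤ a * b := by
    rw [mul_pow]
    calc dist x y ^ 2 * dist (f x) (f y) ^ 2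
        ≤ ((1 + ‖x‖ ^ 2) * (1 + ‖y‖ ^ 2)) * ((1 + ‖f x‖ ^ 2) * (1 + ‖f y‖ ^ 2)) :=
          mul_le_mul (dist_sq_le_one_add_sq_mul_one_add_sq x y)
            (dist_sq_le_one_add_sq_mul_one_add_sq (f x) (f y)) (sq_nonneg _) (by positivity)
      _ = a * b := by ring
  have hd : 0 ≤ dist x y * dist (f x) (f y) := by positivity
  rcases hd.eq_or_lt with h0 | hpos
  · rw [← h0, Real.log_zero]
    have := Real.log_nonneg ha
    have := Real.log_nonneg hb
    positivity
  · have := Real.log_le_log (pow_pos hpos 2) hsq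
    rw [Real.log_pow, Real.log_mul (x := a) (y := b) (by linarith) (by linarith)] at this
    push_cast at this
    linarith

noncomputable def reducedWeight (f : ℂ → ℂ) (Q : ℂ → ℝ) (z : ℂ) : ℝ :=
  Q z - 1 / 2 * Real.log ((1 + ‖z‖ ^ 2) * (1 + ‖f z‖ ^ 2))

theorem add_reducedWeight_le_wKernel (f : ℂ → ℂ) (Q : ℂ → ℝ) (x y : ℂ) :
    reducedWeight f Q x + reducedWeight f Q y ≤ wKernel f Q (x, y) := by
  have := log_dist_mul_dist_le f x y
  simp only [reducedWeight, wKernel]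
  linarith

theorem lowerSemicontinuousOn_reducedWeight {K : Set ℂ} {f : ℂ → ℂ} {Q : ℂ → ℝ}
    (hf : ContinuousOn f K) (hQ : LowerSemicontinuousOn Q K) :
    LowerSemicontinuousOn (reducedWeight f Q) K := by
  have hlog : ContinuousOn (fun z => 1 / 2 * Real.log ((1 + ‖z‖ ^ 2) * (1 + ‖f z‖ ^ 2))) K :=
    continuousOn_const.mul <| ContinuousOn.log (by fun_prop) fun z _ => by positivity
  have hsum := hQ.add hlog.neg.lowerSemicontinuousOn
  simp only [Pi.neg_apply, ← sub_eq_add_neg] at hsum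
  exact hsum

theorem exists_forall_le_reducedWeight {K : Set ℂ} (hK : IsClosed K) {f : ℂ → ℂ}
    (hf : ContinuousOn f K) {Q : ℂ → ℝ} (hQ : LowerSemicontinuousOn Q K)
    (hadm : ∀ M : ℝ, ∃ R : ℝ, ∀ z ∈ K, R ≤ ‖z‖ → M ≤ reducedWeight f Q z) :
    ∃ C, ∀ z ∈ K, C ≤ reducedWeight f Q z := by
  obtain ⟨R, hR⟩ := hadm 0
  have hcompact : IsCompact (K ∩ Metric.closedBall 0 R) := (isCompact_closedBall 0 R).inter_left hK
  obtain ⟨C, hC⟩ := ((lowerSemicontinuousOn_reducedWeight hf hQ).mono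
    inter_subset_left).bddBelow_of_isCompact hcompact
  refine ⟨min 0 C, fun z hz => ?_⟩
  rcases le_or_gt R ‖z‖ with hRz | hzR
  · exact (min_le_left _ _).trans (hR z hz hRz)
  · exact (min_le_right _ _).trans (hC ⟨z, ⟨hz, by simpa using hzR.le⟩, rfl⟩)

theorem lintegral_ofReal_neg_wKernel_ne_top {K : Set ℂ} {f : ℂ → ℂ} {Q : ℂ → ℝ} {C : ℝ}
    (hC : ∀ z ∈ K, C ≤ reducedWeight f Q z) {μ : Measure ℂ} [IsFiniteMeasure μ]
    (hμK : ∀ᵐ z ∂μ, z ∈ K) :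
    ∫⁻ p, ENNReal.ofReal (-(wKernel f Q p)) ∂μ.prod μ ≠ ∞ := by
  have hbound : ∀ᵐ p ∂μ.prod μ, ENNReal.ofReal (-(wKernel f Q p)) ≤ ENNReal.ofReal (-(2 * C)) :=
    (ae_mem_prod_of_ae_mem hμK hμK).mono fun p hp => by
      have := add_reducedWeight_le_wKernel f Q p.1 p.2
      exact ENNReal.ofReal_le_ofReal (by linarith [hC _ hp.1, hC _ hp.2])
  exact ne_top_of_le_ne_top (lintegral_const_lt_top ENNReal.ofReal_ne_top).ne
    (lintegral_mono_ae hbound)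

theorem tendsto_energyQE_cond {f : ℂ → ℂ} {Q : ℂ → ℝ} {μ : Measure ℂ} [IsProbabilityMeasure μ]
    {s : ℕ → Set ℂ} (hmono : Monotone s) (hcover : ∀ᵐ z ∂μ, z ∈ ⋃ n, s n)
    (hneg : ∫⁻ p, ENNReal.ofReal (-(wKernel f Q p)) ∂μ.prod μ ≠ ∞) :
    Tendsto (fun n => energyQE f Q μ[|s n]) atTop (𝓝 (energyQE f Q μ)) := by
  have hmono_prod : Monotone fun n => s n ×ˢ s n := fun m n h => prod_mono (hmono h) (hmono h)
  have hcover_prod : ∀ᵐ p ∂μ.prod μ, p ∈ ⋃ n, s n ×ˢ s n := by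
    rw [iUnion_prod_of_monotone hmono hmono]
    exact ae_mem_prod_of_ae_mem hcover hcover
  simp only [energyQE, cond_prod_cond]
  exact EReal.tendsto_coe_ennreal_sub (tendsto_lintegral_cond_of_monotone hmono_prod hcover_prod _)
    (tendsto_lintegral_cond_of_monotone hmono_prod hcover_prod _) hneg

/-- approximation of the energy from inside by compact sets.  For `K ⊆ ℂ`
closed, `f` continuous on `K`, `Q` an `f`-admissible weight on `K` and `μ` a probability
measure on `K`, there are increasing compact sets `K_m ⊆ K` and probability measures `μ_m`
on `K_m` with `μ_m → μ` weakly and `E^{Q|_{K_m}}(μ_m) → E^Q(μ)` (possibly `+∞`). -/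
theorem energy_approximation_by_compacts
    (K : Set ℂ) (hK : IsClosed K) (f : ℂ → ℂ) (hf : ContinuousOn f K)
    (Q : ℂ → ℝ) (hQlsc : LowerSemicontinuousOn Q K)
    -- `f`-admissibility: `ψ(z) = Q(z) - (1/2)log((1+|z|²)(1+|f(z)|²)) → ∞` as `|z| → ∞` in `K`
    (hadm : ∀ M : ℝ, ∃ R : ℝ, ∀ z ∈ K, R ≤ ‖z‖ →
      M ≤ Q z - (1 / 2) * Real.log ((1 + ‖z‖ ^ 2) * (1 + ‖f z‖ ^ 2)))
    (μ : Measure ℂ) [IsProbabilityMeasure μ] (hμK : μ Kᶜ = 0) :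
    ∃ (Km : ℕ → Set ℂ) (μm : ℕ → Measure ℂ),
      (∀ m, IsCompact (Km m) ∧ Km m ⊆ K) ∧ Monotone Km ∧
      (∀ m, IsProbabilityMeasure (μm m) ∧ μm m (Km m)ᶜ = 0) ∧
      (∀ g : BoundedContinuousFunction ℂ ℝ,
        Filter.Tendsto (fun m => ∫ z, g z ∂(μm m)) Filter.atTop (nhds (∫ z, g z ∂μ))) ∧
      Filter.Tendsto (fun m => energyQE f Q (μm m)) Filter.atTop
        (nhds (energyQE f Q μ)) := by
  obtain ⟨C, hC⟩ := exists_forall_le_reducedWeight hK hf hQlsc hadm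
  have hμK' : ∀ᵐ z ∂μ, z ∈ K := mem_ae_iff.2 hμK
  set s : ℕ → Set ℂ := fun n => K ∩ Metric.closedBall 0 n
  have hs_mono : Monotone s := fun m n h =>
    inter_subset_inter_right K (Metric.closedBall_subset_closedBall (by exact_mod_cast h))
  have hs_cover : ∀ᵐ z ∂μ, z ∈ ⋃ n, s n := by
    simpa only [s, ← inter_iUnion, Metric.iUnion_closedBall_nat, inter_univ] using hμK'
  obtain ⟨n₀, hn₀⟩ := ((tendsto_measure_of_monotone_of_ae_mem_iUnion hs_mono hs_cover).eventually_ne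
    one_ne_zero).exists_forall_of_atTop
  set Km : ℕ → Set ℂ := fun m => s (m + n₀)
  have hKm_mono : Monotone Km := fun m n h => hs_mono (by omega)
  have hKm_meas : ∀ m, MeasurableSet (Km m) := fun _ =>
    hK.measurableSet.inter measurableSet_closedBall
  have hKm_cover : ∀ᵐ z ∂μ, z ∈ ⋃ m, Km m := by rwa [hs_mono.iUnion_nat_add]
  refine ⟨Km, fun m => μ[|Km m],
    fun m => ⟨(isCompact_closedBall _ _).inter_left hK, inter_subset_left⟩, hKm_mono,
    fun m => ⟨cond_isProbabilityMeasure (hn₀ _ (by omega)), ?_⟩,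
    fun g => tendsto_integral_cond_of_monotone hKm_meas hKm_mono hKm_cover (g.integrable μ),
    tendsto_energyQE_cond hKm_mono hKm_cover (lintegral_ofReal_neg_wKernel_ne_top hC hμK')⟩
  rw [cond_apply (hKm_meas m), inter_compl_self, measure_empty, mul_zero]
end
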